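/- arXiv:math/0607208 — 3 statements merged into one kernel-verified Lean document; each statement's English description precedes it below -/
import Mathlib

section
/- (Meshulam's theorem) Let p be an odd prime. There exists a constant c_p > 0, depending only on p, such that for every n ≥ 1 and every set S ⊆ 𝔽_p^n with |S| ≥ c_p·p^n/n, the set S contains a nontrivial three-term arithmetic progression; that is, there exist m, d ∈ 𝔽_p^n with d ≠ 0 and m, m+d, m+2d ∈ S. -/
/-!
Meshulam's density increment. Let `A` be 3AP-free of density `α` in an `n`-dimensional space `V`
over a finite field of odd characteristic. Since `x + y = 2z` has only the `|A|` trivial solutions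
in `A`, counting them with the characters `x ↦ ψ (f x)` gives a nonzero functional `f` with
`|∑_{x ∈ A} ψ (f x)| ≥ α² |V| / 2` as soon as `|A|² > 2 |V|`. Then `A` has relative density at
least `α + α² / 4` on some level set `f = j`, a translate of the `(n - 1)`-dimensional `ker f`.
By induction on `n`, `α ≤ 8 / n`, since `α + α² / 4 ≤ 8 / (n - 1)` already forces `α ≤ 8 / n`.
-/

open scoped Classical
open Finset Module

lemma ThreeAPFree.eq_and_eq_of_add_eq {V : Type*} [AddCommMonoid V] [IsCancelAdd V]
    {A : Set V} (hA : ThreeAPFree A) {x y z : V} (hx : x ∈ A) (hy : y ∈ A) (hz : z ∈ A)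
    (h : x + y = z + z) : x = z ∧ y = z :=
  ⟨hA hx hz hy h, (hA.eq_right hx hz hy h).symm⟩

lemma threeAPFree_of_forall_add_two_nsmul_notMem {V : Type*} [AddCommGroup V] {S : Set V}
    (h : ∀ m d : V, d ≠ 0 → m ∈ S → m + d ∈ S → m + 2 • d ∉ S) : ThreeAPFree S := by
  intro a ha b hb c hc habc
  by_contra hab
  refine h a (b - a) (sub_ne_zero.mpr (Ne.symm hab)) ha (by simpa) ?_
  convert hc using 1
  rw [eq_sub_of_add_eq' habc, two_nsmul]
  abel

lemma exists_ge_mean_add_of_le_norm_sum_mul {ι : Type*} [Fintype ι] [Nonempty ι] (a : ι → ℝ)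
    {w : ι → ℂ} (hw : ∀ i, ‖w i‖ ≤ 1) (hw0 : ∑ i, w i = 0) {δ : ℝ} (hδ : 0 < δ)
    (h : δ ≤ ‖∑ i, a i * w i‖) :
    ∃ i, (∑ j, a j) / Fintype.card ι + δ / (2 * Fintype.card ι) ≤ a i := by
  set c : ℝ := (Fintype.card ι : ℝ)
  have hc : 0 < c := by positivity
  set d : ι → ℝ := fun i => a i - (∑ j, a j) / c
  have hd : ∑ i, d i = 0 := by
    simp only [d, sum_sub_distrib, sum_const, card_univ, nsmul_eq_mul]
    field_simp
    ring
  -- subtracting the mean does not change the sum, as the weights sum to zero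
  have hδd : δ ≤ ∑ i, |d i| := calc
    δ ≤ ‖∑ i, a i * w i‖ := h
    _ = ‖∑ i, (d i : ℂ) * w i‖ := by
        simp only [d, Complex.ofReal_sub, sub_mul, sum_sub_distrib, ← mul_sum, hw0, mul_zero,
          sub_zero]
    _ ≤ ∑ i, |d i| := by
        refine (norm_sum_le _ _).trans (sum_le_sum fun i _ => ?_)
        rw [norm_mul, Complex.norm_real, Real.norm_eq_abs]
        exact mul_le_of_le_one_right (abs_nonneg _) (hw i)
  obtain ⟨i, -, hi⟩ : ∃ i ∈ univ, δ / c ≤ |d i| + d i := by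
    refine exists_le_of_sum_le univ_nonempty ?_
    rw [sum_add_distrib, hd, add_zero, sum_const, card_univ, nsmul_eq_mul]
    exact (mul_div_cancel₀ δ hc.ne').trans_le hδd
  refine ⟨i, ?_⟩
  have : 0 < δ / c := by positivity
  rcases abs_cases (d i) with ⟨hab, -⟩ | ⟨hab, -⟩ <;> rw [hab] at hi
  · have : δ / (2 * c) ≤ d i := by rw [div_mul_eq_div_div_swap]; linarith
    simp only [d] at this
    linarith
  · linarith

lemma Nat.sq_le_three_pow (k : ℕ) : k ^ 2 ≤ 3 ^ k := by
  induction k with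
  | zero => norm_num
  | succ k ih =>
    rcases Nat.lt_or_ge k 2 with hk | hk
    · interval_cases k <;> norm_num
    · rw [pow_succ 3 k]; nlinarith

lemma le_div_add_one_of_add_sq_div_four_le {n : ℝ} (hn : 1 ≤ n) {α : ℝ}
    (h : α + α ^ 2 / 4 ≤ 8 / n) : α ≤ 8 / (n + 1) := by
  by_contra! hα
  rw [div_lt_iff₀ (by linarith)] at hα
  rw [le_div_iff₀ (by linarith)] at h
  have hα0 : 0 < α := by nlinarith
  have : α * n < 4 := by nlinarith
  nlinarith

namespace Meshulam

variable {F V : Type*} [Field F] [AddCommGroup V] [Module F V]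

/-- For nontrivial `ψ`, the characters of `V` are exactly the maps `x ↦ ψ (f x)` with `f` in the
dual, so this is the Fourier coefficient of `1_A` at the character indexed by `f`. -/
def charSum (ψ : AddChar F ℂ) (A : Finset V) (f : Dual F V) : ℂ := ∑ x ∈ A, ψ (f x)

lemma charSum_zero (ψ : AddChar F ℂ) (A : Finset V) : charSum ψ A 0 = #A := by
  simp [charSum]

lemma exists_threeAPFree_ker_card_eq [Fintype V] {A : Finset V} (hA : ThreeAPFree (A : Set V))
    {f : Dual F V} (hf : f ≠ 0) (j : F) :
    ∃ B : Finset (LinearMap.ker f), ThreeAPFree (B : Set (LinearMap.ker f)) ∧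
      #B = #{x ∈ A | f x = j} := by
  obtain ⟨x₀, rfl⟩ := LinearMap.surjective hf j
  refine ⟨univ.filter fun k : LinearMap.ker f => (k : V) + x₀ ∈ A, ?_, ?_⟩
  · intro a ha b hb c hc habc
    simp only [coe_filter, mem_univ, true_and, Set.mem_ofPred_eq] at ha hb hc
    have := hA ha hb hc (by rw [add_add_add_comm, ← Submodule.coe_add, habc,
      Submodule.coe_add, add_add_add_comm])
    exact Subtype.ext (add_right_cancel this)
  · refine card_nbij (fun k => k + x₀) (fun k hk => ?_) (fun k _ l _ h => ?_) (fun x hx => ?_)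
    · simp_all
    · exact Subtype.ext (add_right_cancel h)
    · simp only [coe_filter, Set.mem_ofPred_eq] at hx
      exact ⟨⟨x - x₀, by simp [hx.2]⟩, by simp [hx.1], by simp⟩

variable [Fintype F]

lemma three_le_card_of_two_ne_zero (h2 : (2 : F) ≠ 0) : 3 ≤ Fintype.card F :=
  Fintype.two_lt_card_iff.mpr ⟨0, 1, 2, zero_ne_one, h2.symm, fun h => one_ne_zero (α := F) <| by
    linear_combination -h⟩

variable {ψ : AddChar F ℂ}

lemma exists_card_fiber_ge (hψ : ψ ≠ 0) (A : Finset V) (f : Dual F V) {δ : ℝ} (hδ : 0 < δ)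
    (h : δ ≤ ‖charSum ψ A f‖) :
    ∃ j : F, (#A : ℝ) / Fintype.card F + δ / (2 * Fintype.card F) ≤ #{x ∈ A | f x = j} := by
  have hsum : ∑ j, (#{x ∈ A | f x = j} : ℝ) = #A := by
    exact_mod_cast (card_eq_sum_card_fiberwise fun x _ => mem_univ (f x)).symm
  have hchar : charSum ψ A f = ∑ j, (#{x ∈ A | f x = j} : ℝ) * ψ j := by
    rw [charSum, ← sum_fiberwise A f]
    refine sum_congr rfl fun j _ => ?_
    rw [sum_congr rfl fun x hx => by rw [(mem_filter.mp hx).2], sum_const, nsmul_eq_mul]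
    push_cast
    rfl
  rw [← hsum]
  exact exists_ge_mean_add_of_le_norm_sum_mul _ (fun j => (ψ.norm_apply j).le)
    (AddChar.sum_eq_zero_iff_ne_zero.mpr hψ) hδ (hchar ▸ h)

variable [Fintype V]

noncomputable instance : Fintype (Dual F V) :=
  have : Finite (Dual F V) := Module.finite_of_finite F
  Fintype.ofFinite _

lemma card_dual : Fintype.card (Dual F V) = Fintype.card V := by
  rw [card_eq_pow_finrank (K := F), card_eq_pow_finrank (K := F) (V := V),
    Subspace.dual_finrank_eq]

lemma card_ker_mul_card {f : Dual F V} (hf : f ≠ 0) :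
    Fintype.card (LinearMap.ker f) * Fintype.card F = Fintype.card V := by
  rw [card_eq_pow_finrank (K := F), card_eq_pow_finrank (K := F) (V := V),
    ← Dual.finrank_ker_add_one_of_ne_zero hf, pow_succ]

lemma sum_dual_apply_eq_ite (hψ : ψ ≠ 0) (x : V) :
    ∑ f : Dual F V, ψ (f x) = if x = 0 then (Fintype.card V : ℂ) else 0 := by
  have trivial_iff : ψ.compAddMonoidHom (Dual.eval F V x).toAddMonoidHom = 0 ↔ x = 0 := by
    refine ⟨fun h => ?_, by rintro rfl; ext; simp⟩
    by_contra hx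
    obtain ⟨g, hg⟩ : ∃ g : Dual F V, g x ≠ 0 := by
      simpa using (forall_dual_apply_eq_zero_iff F x).not.mpr hx
    obtain ⟨a, ha⟩ := AddChar.ne_zero_iff.mp hψ
    have := DFunLike.congr_fun h ((a / g x) • g)
    simp [hg, ha] at this
  simpa [trivial_iff, card_dual] using
    AddChar.sum_eq_ite (ψ.compAddMonoidHom (Dual.eval F V x).toAddMonoidHom)

lemma sum_norm_charSum_sq (hψ : ψ ≠ 0) (A : Finset V) :
    ∑ f : Dual F V, ‖charSum ψ A f‖ ^ 2 = (Fintype.card V * #A : ℝ) := by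
  have expand : ∀ f : Dual F V, (‖charSum ψ A f‖ : ℂ) ^ 2 =
      ∑ x ∈ A, ∑ y ∈ A, ψ (f (x - y)) := by
    intro f
    rw [← Complex.mul_conj', charSum, map_sum, sum_mul_sum]
    simp only [← AddChar.map_neg_eq_conj, ← AddChar.map_add_eq_mul, sub_eq_add_neg, map_add,
      map_neg]
  apply Complex.ofReal_injective
  push_cast
  simp only [expand]
  rw [sum_comm]
  simp only [sum_comm (s := univ), sum_dual_apply_eq_ite hψ, sub_eq_zero, sum_ite_eq]
  simp [mul_comm]

lemma sum_charSum_sq_mul_charSum_neg_two_smul (hψ : ψ ≠ 0) {A : Finset V}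
    (hA : ThreeAPFree (A : Set V)) :
    ∑ f : Dual F V, charSum ψ A f ^ 2 * charSum ψ A ((-2 : F) • f) = Fintype.card V * #A := by
  have expand : ∀ f : Dual F V, charSum ψ A f ^ 2 * charSum ψ A ((-2 : F) • f) =
      ∑ z ∈ A, ∑ y ∈ A, ∑ x ∈ A, ψ (f (x + y + (-2 : F) • z)) := by
    intro f
    simp only [charSum, sq, sum_mul, mul_sum, map_add, map_smul, LinearMap.smul_apply,
      AddChar.map_add_eq_mul]
  have solutions : ∀ x ∈ A, ∀ y ∈ A, ∀ z ∈ A, (x + y + (-2 : F) • z = 0 ↔ x = z ∧ y = z) := by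
    intro x hx y hy z hz
    constructor
    · intro h
      refine hA.eq_and_eq_of_add_eq hx hy hz ?_
      rw [← sub_eq_zero, ← h, neg_smul, two_smul]
      abel
    · rintro ⟨rfl, rfl⟩
      rw [neg_smul, two_smul]
      abel
  simp only [expand]
  rw [sum_comm]
  simp only [sum_comm (s := univ), sum_dual_apply_eq_ite hψ]
  calc ∑ z ∈ A, ∑ y ∈ A, ∑ x ∈ A,
        (if x + y + (-2 : F) • z = 0 then (Fintype.card V : ℂ) else 0)
      = ∑ z ∈ A, ∑ y ∈ A, ∑ x ∈ A, (if x = z ∧ y = z then (Fintype.card V : ℂ) else 0) := by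
        refine sum_congr rfl fun z hz => sum_congr rfl fun y hy => sum_congr rfl fun x hx => ?_
        rw [if_congr (solutions x hx y hy z hz) rfl rfl]
    _ = Fintype.card V * #A := by
        simp [ite_and, mul_comm]

lemma exists_ne_zero_le_norm_charSum (hψ : ψ ≠ 0) (h2 : (2 : F) ≠ 0) {A : Finset V}
    (hA : ThreeAPFree (A : Set V)) (hA2 : 2 * Fintype.card V < (#A : ℝ) ^ 2) :
    ∃ f : Dual F V, f ≠ 0 ∧ (#A : ℝ) ^ 2 / (2 * Fintype.card V) ≤ ‖charSum ψ A f‖ := by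
  by_contra! small
  set N : ℝ := (Fintype.card V : ℝ)
  set r : ℝ := (#A : ℝ)
  set δ := r ^ 2 / (2 * N)
  have hN : 0 < N := by positivity
  have hr : 0 < r := by nlinarith [show (0 : ℝ) ≤ r by positivity]
  have count := sum_charSum_sq_mul_charSum_neg_two_smul hψ hA
  rw [← add_sum_erase _ _ (mem_univ 0), smul_zero, charSum_zero] at count
  have nontrivial : ‖∑ f ∈ univ.erase 0, charSum ψ A f ^ 2 * charSum ψ A ((-2 : F) • f)‖
      ≤ δ * (N * r) := calc
    _ ≤ ∑ f ∈ univ.erase 0, ‖charSum ψ A f‖ ^ 2 * δ := by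
        refine (norm_sum_le _ _).trans (sum_le_sum fun f hf => ?_)
        rw [norm_mul, norm_pow]
        have hf0 : (-2 : F) • f ≠ 0 := smul_ne_zero (neg_ne_zero.mpr h2) (ne_of_mem_erase hf)
        exact mul_le_mul_of_nonneg_left (small _ hf0).le (by positivity)
    _ ≤ ∑ f, ‖charSum ψ A f‖ ^ 2 * δ :=
        sum_le_sum_of_subset_of_nonneg (erase_subset _ _) fun _ _ _ => by positivity
    _ = δ * (N * r) := by rw [← sum_mul, sum_norm_charSum_sq hψ, mul_comm]
  have : ∑ f ∈ univ.erase 0, charSum ψ A f ^ 2 * charSum ψ A ((-2 : F) • f)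
      = ((N * r - r ^ 3 : ℝ) : ℂ) := by
    rw [eq_sub_of_add_eq' count]; simp only [N, r]; push_cast; ring
  rw [this, Complex.norm_real, Real.norm_eq_abs] at nontrivial
  have : δ * (N * r) = r ^ 3 / 2 := by simp only [δ]; field_simp
  have := neg_abs_le (N * r - r ^ 3)
  nlinarith

lemma exists_ker_threeAPFree_density_ge (h2 : (2 : F) ≠ 0) {A : Finset V}
    (hA : ThreeAPFree (A : Set V)) (hA2 : 2 * Fintype.card V < (#A : ℝ) ^ 2) :
    ∃ f : Dual F V, f ≠ 0 ∧
      ∃ B : Finset (LinearMap.ker f), ThreeAPFree (B : Set (LinearMap.ker f)) ∧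
        (#A / Fintype.card V : ℝ) + (#A / Fintype.card V : ℝ) ^ 2 / 4 ≤
          #B / Fintype.card (LinearMap.ker f) := by
  obtain ⟨ψ, hψ1⟩ := AddChar.exists_apply_ne_zero.mpr (one_ne_zero : (1 : F) ≠ 0)
  have hψ : ψ ≠ 0 := fun h => hψ1 (by rw [h, AddChar.zero_apply])
  have hN : (0 : ℝ) < Fintype.card V := by positivity
  have hq : (0 : ℝ) < Fintype.card F := by positivity
  have hδ : (0 : ℝ) < #A ^ 2 / (2 * Fintype.card V) := div_pos (by linarith) (by positivity)
  obtain ⟨f, hf, hlarge⟩ := exists_ne_zero_le_norm_charSum hψ h2 hA hA2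
  obtain ⟨j, hj⟩ := exists_card_fiber_ge hψ A f hδ hlarge
  obtain ⟨B, hB, hBcard⟩ := exists_threeAPFree_ker_card_eq hA hf j
  refine ⟨f, hf, B, hB, ?_⟩
  have hker : (Fintype.card (LinearMap.ker f) : ℝ) = Fintype.card V / Fintype.card F := by
    rw [eq_div_iff hq.ne', ← card_ker_mul_card hf, Nat.cast_mul]
  rw [hker, hBcard, le_div_iff₀ (by positivity)]
  refine le_of_eq_of_le ?_ hj
  field_simp
  ring

end Meshulam

open Meshulam in
theorem ThreeAPFree.density_le_of_finrank_pos {F V : Type*} [Field F] [Fintype F]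
    [AddCommGroup V] [Module F V] [Fintype V] (h2 : (2 : F) ≠ 0) {A : Finset V}
    (hA : ThreeAPFree (A : Set V)) (hV : 0 < finrank F V) :
    (#A : ℝ) / Fintype.card V ≤ 8 / finrank F V := by
  obtain ⟨n, hn⟩ := Nat.exists_eq_add_one_of_ne_zero hV.ne'
  rw [hn, Nat.cast_add_one]
  clear hV
  induction n generalizing V with
  | zero =>
    rw [div_le_iff₀ (by positivity)]
    have : (#A : ℝ) ≤ Fintype.card V := by exact_mod_cast card_le_univ A
    linarith
  | succ n ih =>
    by_contra! hα
    have hV : (0 : ℝ) < Fintype.card V := by positivity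
    have hA2 : 2 * Fintype.card V < (#A : ℝ) ^ 2 := by
      have hpow : ((n + 2 : ℕ) : ℝ) ^ 2 ≤ Fintype.card V := by
        rw [card_eq_pow_finrank (K := F), hn]
        exact_mod_cast (Nat.sq_le_three_pow _).trans
          (Nat.pow_le_pow_left (three_le_card_of_two_ne_zero h2) _)
      rw [lt_div_iff₀ hV, div_mul_eq_mul_div, div_lt_iff₀ (by positivity)] at hα
      push_cast at hpow hα
      nlinarith [mul_lt_mul'' hα hα (by positivity) (by positivity)]
    obtain ⟨f, hf, B, hB, hdens⟩ := exists_ker_threeAPFree_density_ge h2 hA hA2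
    have hker : finrank F (LinearMap.ker f) = n + 1 := by
      have := Dual.finrank_ker_add_one_of_ne_zero hf
      omega
    have := le_div_add_one_of_add_sq_div_four_le (n := n + 1) (by linarith)
      (hdens.trans (ih hB hker))
    push_cast at hα
    linarith

theorem stmt7_general (p : ℕ) (hp : p.Prime) (hodd : Odd p) :
    ∃ c : ℝ, 0 < c ∧
      ∀ n : ℕ, 1 ≤ n → ∀ S : Finset (Fin n → ZMod p),
        c * (p : ℝ) ^ n / n ≤ (S.card : ℝ) →
        ∃ m d : Fin n → ZMod p, d ≠ 0 ∧ m ∈ S ∧ m + d ∈ S ∧ m + 2 • d ∈ S := by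
  have : Fact p.Prime := ⟨hp⟩
  have h2 : (2 : ZMod p) ≠ 0 := Ring.two_ne_zero <| by
    rw [ZMod.ringChar_zmod_n]; rintro rfl; exact absurd hodd (by decide)
  refine ⟨9, by norm_num, fun n hn S hS => ?_⟩
  by_contra! hfree
  have hdens := (threeAPFree_of_forall_add_two_nsmul_notMem hfree).density_le_of_finrank_pos h2
    (by rwa [finrank_fin_fun])
  rw [finrank_fin_fun, Fintype.card_fun, ZMod.card, Fintype.card_fin] at hdens
  have hpn : (0 : ℝ) < (p : ℝ) ^ n := by have := hp.pos; positivity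
  push_cast at hdens
  rw [div_le_div_iff₀ hpn (by positivity)] at hdens
  rw [div_le_iff₀ (by positivity)] at hS
  nlinarith

/-- Meshulam's theorem: there is a constant `c_p > 0` such that every
`S ⊆ 𝔽_pⁿ` with `|S| ≥ c_p·pⁿ/n` contains a nontrivial three-term arithmetic
progression. -/
theorem stmt7 (p : ℕ) (hp : p.Prime) (hodd : Odd p) [NeZero p] :
    ∃ c : ℝ, 0 < c ∧
      ∀ n : ℕ, 1 ≤ n → ∀ S : Finset (Fin n → ZMod p),
        c * (p : ℝ) ^ n / n ≤ (S.card : ℝ) →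
        ∃ m d : Fin n → ZMod p, d ≠ 0 ∧ m ∈ S ∧ m + d ∈ S ∧ m + 2 • d ∈ S :=
  stmt7_general p hp hodd
end

section
/- Let p be an odd prime, n ≥ 1, Δ > 0, and f : 𝔽_p^n → [0,1]. Let V be an 𝔽_p-subspace of 𝔽_p^n containing every a ∈ 𝔽_p^n with |f̂(a)| > Δ·p^n, and let W = V^⊥ = {w ∈ 𝔽_p^n : w·v = 0 for all v ∈ V} be its orthogonal complement with respect to the standard dot product. Then Λ₃(f_W) ≤ Λ₃(f) + Δ. -/
open scoped Classical

noncomputable def lambda3 {p n : ℕ} [NeZero p] (f : (Fin n → ZMod p) → ℝ) : ℝ :=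
  (∑ m : Fin n → ZMod p, ∑ d : Fin n → ZMod p, f m * f (m + d) * f (m + 2 • d)) / (p : ℝ) ^ (2 * n)

noncomputable def avgW {p n : ℕ} [NeZero p] (W : Submodule (ZMod p) (Fin n → ZMod p))
    (f : (Fin n → ZMod p) → ℝ) (m : Fin n → ZMod p) : ℝ :=
  (∑ w : W, f (m + ↑w)) / (Nat.card W : ℝ)

noncomputable def ft {p n : ℕ} [NeZero p] (f : (Fin n → ZMod p) → ℝ)
    (a : Fin n → ZMod p) : ℂ :=
  ∑ m : Fin n → ZMod p, (f m : ℂ) *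
    Complex.exp (2 * Real.pi * Complex.I * ((dotProduct a m).val : ℂ) / p)

/-!
On the Fourier side, `p^{3n} Λ₃(g) = ∑ₐ ĝ(a)² ĝ(-2a)`. Averaging over `W` multiplies `f̂` by the
indicator of `W^⊥ ⊇ V`, so `Λ₃(f) - Λ₃(f_W)` only collects the frequencies `a ∉ W^⊥`, where
`‖f̂(a)‖ ≤ Δ pⁿ`. Bounding one factor `f̂(a)` this way, the rest is at most
`∑ₐ ‖f̂(a)‖ ‖f̂(-2a)‖ ≤ ∑ₐ ‖f̂(a)‖² = pⁿ ∑ f² ≤ p^{2n}`, since `a ↦ -2a` is a bijection for odd `p`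
and by Parseval.
-/

open ZMod

lemma sum_mul_apply_perm_le_sum_sq {α : Type*} [Fintype α] (e : Equiv.Perm α) (u : α → ℝ) :
    ∑ a, u a * u (e a) ≤ ∑ a, u a ^ 2 := by
  have hsq : 0 ≤ ∑ a, (u a - u (e a)) ^ 2 := Finset.sum_nonneg fun a _ ↦ sq_nonneg _
  have he : ∑ a, u (e a) ^ 2 = ∑ a, u a ^ 2 := Equiv.sum_comp e (u · ^ 2)
  simp only [sub_sq, Finset.sum_add_distrib, Finset.sum_sub_distrib, mul_assoc,
    ← Finset.mul_sum] at hsq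
  linarith

lemma isUnit_neg_two_of_odd {p : ℕ} (hp : Odd p) : IsUnit (-2 : ZMod p) := by
  simpa using ((ZMod.isUnit_iff_coprime 2 p).2 (Nat.coprime_two_left.2 hp)).neg

section Fourier

variable {p n : ℕ} [NeZero p]

lemma stdAddChar_eq_one_iff {x : ZMod p} : stdAddChar x = 1 ↔ x = 0 := by
  rw [← AddChar.map_zero_eq_one (stdAddChar (N := p)), injective_stdAddChar.eq_iff]

lemma sum_stdAddChar_comp_eq_ite {G : Type*} [AddCommGroup G] [Fintype G] (φ : G →+ ZMod p) :
    ∑ x, stdAddChar (φ x) = if ∀ x, φ x = 0 then (Fintype.card G : ℂ) else 0 := by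
  simpa only [AddChar.eq_zero_iff, AddChar.compAddMonoidHom_apply, stdAddChar_eq_one_iff]
    using (stdAddChar.compAddMonoidHom φ).sum_eq_ite

lemma sum_stdAddChar_dotProduct (b : Fin n → ZMod p) :
    ∑ a : Fin n → ZMod p, stdAddChar (a ⬝ᵥ b) = if b = 0 then (p : ℂ) ^ n else 0 := by
  have h := sum_stdAddChar_comp_eq_ite (((dotProductEquiv (ZMod p) (Fin n)) b).toAddMonoidHom)
  simp only [LinearMap.toAddMonoidHom_coe, dotProductEquiv_apply_apply] at h
  simp_rw [dotProduct_comm _ b, h, dotProduct_eq_zero_iff]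
  simp [ZMod.card]

lemma sum_stdAddChar_dotProduct_submodule (W : Submodule (ZMod p) (Fin n → ZMod p))
    (a : Fin n → ZMod p) :
    ∑ w : W, stdAddChar (a ⬝ᵥ w) = if ∀ w ∈ W, a ⬝ᵥ w = 0 then (Nat.card W : ℂ) else 0 := by
  have h := sum_stdAddChar_comp_eq_ite
    ((((dotProductEquiv (ZMod p) (Fin n)) a).comp W.subtype).toAddMonoidHom)
  simp only [LinearMap.toAddMonoidHom_coe, LinearMap.comp_apply, dotProductEquiv_apply_apply,
    Submodule.subtype_apply, Subtype.forall] at h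
  simpa only [Nat.card_eq_fintype_card] using h

lemma ft_eq_sum (f : (Fin n → ZMod p) → ℝ) (a : Fin n → ZMod p) :
    ft f a = ∑ m, (f m : ℂ) * stdAddChar (a ⬝ᵥ m) := by
  simp [ft, stdAddChar_apply, toCircle_apply]

lemma ft_comp_add_right (f : (Fin n → ZMod p) → ℝ) (t a : Fin n → ZMod p) :
    ft (fun m ↦ f (m + t)) a = stdAddChar (-(a ⬝ᵥ t)) * ft f a := by
  rw [ft_eq_sum, ft_eq_sum, Finset.mul_sum]
  refine Fintype.sum_equiv (Equiv.addRight t) _ _ fun m ↦ ?_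
  rw [Equiv.coe_addRight, show a ⬝ᵥ m = -(a ⬝ᵥ t) + a ⬝ᵥ (m + t) by rw [dotProduct_add]; abel,
    AddChar.map_add_eq_mul]
  ring

lemma ft_avgW (W : Submodule (ZMod p) (Fin n → ZMod p)) (f : (Fin n → ZMod p) → ℝ)
    (a : Fin n → ZMod p) :
    ft (avgW W f) a = if ∀ w ∈ W, a ⬝ᵥ w = 0 then ft f a else 0 := by
  calc ft (avgW W f) a
      = (Nat.card W : ℂ)⁻¹ * ∑ w : W, ft (fun m ↦ f (m + (w : Fin n → ZMod p))) a := by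
        simp only [ft_eq_sum, avgW]
        push_cast
        simp only [div_eq_inv_mul, Finset.mul_sum, Finset.sum_mul, mul_assoc]
        exact Finset.sum_comm
    _ = (Nat.card W : ℂ)⁻¹ * (∑ w : W, stdAddChar ((-a) ⬝ᵥ w)) * ft f a := by
        simp only [ft_comp_add_right, neg_dotProduct, Finset.sum_mul, mul_assoc]
    _ = _ := by
        rw [sum_stdAddChar_dotProduct_submodule]
        simp only [neg_dotProduct, neg_eq_zero]
        split_ifs <;> simp

lemma sum_norm_ft_sq (f : (Fin n → ZMod p) → ℝ) :
    ∑ a, ‖ft f a‖ ^ 2 = (p : ℝ) ^ n * ∑ m, f m ^ 2 := by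
  have hexp (a : Fin n → ZMod p) : ((‖ft f a‖ ^ 2 : ℝ) : ℂ)
      = ∑ x, ∑ y, (f x * f y : ℂ) * stdAddChar (a ⬝ᵥ (x - y)) := by
    rw [Complex.ofReal_pow, ← Complex.mul_conj', ft_eq_sum, map_sum, Finset.sum_mul_sum]
    simp only [map_mul, Complex.conj_ofReal, ← AddChar.map_neg_eq_conj]
    refine Finset.sum_congr rfl fun x _ ↦ Finset.sum_congr rfl fun y _ ↦ ?_
    rw [dotProduct_sub, sub_eq_add_neg, AddChar.map_add_eq_mul]
    ring
  apply Complex.ofReal_injective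
  rw [Complex.ofReal_sum]
  simp_rw [hexp]
  push_cast
  rw [Finset.sum_comm, Finset.mul_sum]
  refine Finset.sum_congr rfl fun x _ ↦ ?_
  rw [Finset.sum_comm]
  simp_rw [← Finset.mul_sum, sum_stdAddChar_dotProduct, sub_eq_zero, mul_ite, mul_zero,
    Finset.sum_ite_eq, Finset.mem_univ, if_true]
  ring

lemma sum_ft_sq_mul_ft_neg_two_smul (g : (Fin n → ZMod p) → ℝ) :
    ∑ a, ft g a ^ 2 * ft g ((-2 : ZMod p) • a)
      = (p : ℂ) ^ n * ∑ m, ∑ d, (g m * g (m + d) * g (m + 2 • d) : ℂ) := by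
  have hexp (a : Fin n → ZMod p) : ft g a ^ 2 * ft g ((-2 : ZMod p) • a)
      = ∑ x, ∑ y, ∑ z, (g x * g y * g z : ℂ) * stdAddChar (a ⬝ᵥ (x + y + (-2 : ZMod p) • z)) := by
    rw [sq, ft_eq_sum, ft_eq_sum, Finset.sum_mul_sum, Finset.sum_mul]
    refine Finset.sum_congr rfl fun x _ ↦ ?_
    rw [Finset.sum_mul]
    refine Finset.sum_congr rfl fun y _ ↦ ?_
    rw [Finset.mul_sum]
    refine Finset.sum_congr rfl fun z _ ↦ ?_
    rw [dotProduct_add, dotProduct_add, dotProduct_smul, smul_dotProduct, AddChar.map_add_eq_mul,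
      AddChar.map_add_eq_mul]
    ring
  calc ∑ a, ft g a ^ 2 * ft g ((-2 : ZMod p) • a)
      = ∑ x, ∑ z, ∑ y, (g x * g y * g z : ℂ)
          * ∑ a : Fin n → ZMod p, stdAddChar (a ⬝ᵥ (x + y + (-2 : ZMod p) • z)) := by
        simp only [hexp, Finset.mul_sum]
        rw [Finset.sum_comm]
        refine Finset.sum_congr rfl fun x _ ↦ ?_
        exact (Finset.sum_comm.trans (Finset.sum_congr rfl fun y _ ↦ Finset.sum_comm)).trans
          Finset.sum_comm
    _ = ∑ x, ∑ z, (g x * g (2 • z - x) * g z : ℂ) * (p : ℂ) ^ n := by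
        refine Finset.sum_congr rfl fun x _ ↦ Finset.sum_congr rfl fun z _ ↦ ?_
        simp_rw [sum_stdAddChar_dotProduct, mul_ite, mul_zero]
        simp_rw [show ∀ y, x + y + (-2 : ZMod p) • z = y - (2 • z - x) from fun y ↦ by module,
          sub_eq_zero, Finset.sum_ite_eq', Finset.mem_univ, if_true]
    _ = _ := by
        rw [Finset.mul_sum]
        refine Finset.sum_congr rfl fun m _ ↦ ?_
        rw [Finset.mul_sum]
        refine (Fintype.sum_equiv (Equiv.addLeft m) _ _ fun d ↦ ?_).symm
        rw [Equiv.coe_addLeft, show 2 • (m + d) - m = m + 2 • d by module]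
        ring

lemma sum_norm_ft_sq_le {f : (Fin n → ZMod p) → ℝ} (hf : ∀ m, |f m| ≤ 1) :
    ∑ a, ‖ft f a‖ ^ 2 ≤ (p : ℝ) ^ n * (p : ℝ) ^ n := by
  rw [sum_norm_ft_sq]
  gcongr
  calc ∑ m, f m ^ 2 ≤ ∑ _m : Fin n → ZMod p, (1 : ℝ) :=
        Finset.sum_le_sum fun m _ ↦ (sq_le_one_iff_abs_le_one _).2 (hf m)
    _ = (p : ℝ) ^ n := by simp [ZMod.card]

lemma norm_sum_ft_sq_mul_ft_smul_le (f : (Fin n → ZMod p) → ℝ) {c : ZMod p} (hc : IsUnit c)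
    (s : Finset (Fin n → ZMod p)) {M : ℝ} (hM : 0 ≤ M) (hs : ∀ a ∈ s, ‖ft f a‖ ≤ M) :
    ‖∑ a ∈ s, ft f a ^ 2 * ft f (c • a)‖ ≤ M * ∑ a, ‖ft f a‖ ^ 2 := by
  calc ‖∑ a ∈ s, ft f a ^ 2 * ft f (c • a)‖
      ≤ ∑ a ∈ s, ‖ft f a‖ * (‖ft f a‖ * ‖ft f (c • a)‖) := by
        refine (norm_sum_le _ _).trans_eq (Finset.sum_congr rfl fun a _ ↦ ?_)
        rw [norm_mul, norm_pow, sq, mul_assoc]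
    _ ≤ ∑ a ∈ s, M * (‖ft f a‖ * ‖ft f (c • a)‖) :=
        Finset.sum_le_sum fun a ha ↦ by gcongr; exact hs a ha
    _ ≤ M * ∑ a, ‖ft f a‖ * ‖ft f (c • a)‖ := by
        rw [← Finset.mul_sum]
        exact mul_le_mul_of_nonneg_left (Finset.sum_le_sum_of_subset_of_nonneg
          (Finset.subset_univ s) fun _ _ _ ↦ by positivity) hM
    _ ≤ M * ∑ a, ‖ft f a‖ ^ 2 := by
        refine mul_le_mul_of_nonneg_left ?_ hM
        simpa only [MulAction.toPerm_apply, Units.smul_def, IsUnit.unit_spec]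
          using sum_mul_apply_perm_le_sum_sq (MulAction.toPerm hc.unit) (‖ft f ·‖)

lemma lambda3_eq_sum_ft (g : (Fin n → ZMod p) → ℝ) :
    (lambda3 g : ℂ) = (∑ a, ft g a ^ 2 * ft g ((-2 : ZMod p) • a)) / (p : ℂ) ^ (3 * n) := by
  have hp : (p : ℂ) ≠ 0 := Nat.cast_ne_zero.2 (NeZero.ne p)
  rw [sum_ft_sq_mul_ft_neg_two_smul, lambda3]
  push_cast
  field_simp
  ring

lemma lambda3_sub_lambda3_avgW (W : Submodule (ZMod p) (Fin n → ZMod p))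
    (f : (Fin n → ZMod p) → ℝ) :
    (lambda3 f - lambda3 (avgW W f) : ℂ)
      = (∑ a ∈ Finset.univ.filter (fun a ↦ ¬ ∀ w ∈ W, a ⬝ᵥ w = 0),
          ft f a ^ 2 * ft f ((-2 : ZMod p) • a)) / (p : ℂ) ^ (3 * n) := by
  rw [lambda3_eq_sum_ft, lambda3_eq_sum_ft, ← sub_div, Finset.sum_filter, ← Finset.sum_sub_distrib]
  congr 1
  refine Finset.sum_congr rfl fun a _ ↦ ?_
  by_cases h : ∀ w ∈ W, a ⬝ᵥ w = 0
  · have h2 : ∀ w ∈ W, ((-2 : ZMod p) • a) ⬝ᵥ w = 0 := fun w hw ↦ by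
      rw [smul_dotProduct, h w hw, smul_zero]
    rw [ft_avgW, ft_avgW, if_pos h, if_pos h2, sub_self, if_neg (not_not_intro h)]
  · rw [ft_avgW, if_neg h, if_pos h]
    ring

end Fourier

theorem stmt9_general (p : ℕ) (hodd : Odd p) [NeZero p] (n : ℕ)
    (Δ : ℝ) (hΔ : 0 < Δ)
    (f : (Fin n → ZMod p) → ℝ) (hf : ∀ m, 0 ≤ f m ∧ f m ≤ 1)
    (V : Submodule (ZMod p) (Fin n → ZMod p))
    (hV : ∀ a : Fin n → ZMod p, Δ * (p : ℝ) ^ n < ‖ft f a‖ → a ∈ V)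
    (W : Submodule (ZMod p) (Fin n → ZMod p))
    (hW : ∀ w : Fin n → ZMod p, w ∈ W ↔ ∀ v ∈ V, dotProduct w v = 0) :
    lambda3 (avgW W f) ≤ lambda3 f + Δ := by
  have hVW : ∀ a ∈ V, ∀ w ∈ W, a ⬝ᵥ w = 0 := fun a ha w hw ↦ by
    rw [dotProduct_comm]
    exact (hW w).1 hw a ha
  have hsmall : ∀ a ∈ Finset.univ.filter (fun a ↦ ¬ ∀ w ∈ W, a ⬝ᵥ w = 0),
      ‖ft f a‖ ≤ Δ * (p : ℝ) ^ n := fun a ha ↦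
    le_of_not_gt fun hlarge ↦ (Finset.mem_filter.1 ha).2 (hVW a (hV a hlarge))
  have hparseval := sum_norm_ft_sq_le fun m ↦ abs_le.2 ⟨by linarith [(hf m).1], (hf m).2⟩
  have hp : (0 : ℝ) < p := Nat.cast_pos.2 (Nat.pos_of_neZero p)
  have hdiff : |lambda3 f - lambda3 (avgW W f)| ≤ Δ := by
    rw [← Real.norm_eq_abs, ← Complex.norm_real, Complex.ofReal_sub, lambda3_sub_lambda3_avgW,
      norm_div, norm_pow, Complex.norm_natCast, div_le_iff₀ (by positivity)]
    calc _ ≤ Δ * (p : ℝ) ^ n * ∑ a, ‖ft f a‖ ^ 2 :=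
          norm_sum_ft_sq_mul_ft_smul_le f (isUnit_neg_two_of_odd hodd) _ (by positivity) hsmall
      _ ≤ Δ * (p : ℝ) ^ n * ((p : ℝ) ^ n * (p : ℝ) ^ n) := by gcongr
      _ = Δ * (p : ℝ) ^ (3 * n) := by ring
  linarith [neg_abs_le (lambda3 f - lambda3 (avgW W f))]

/-- if `V` contains all large Fourier coefficients of `f` (those `a` with
`|f̂(a)| > Δ·pⁿ`) and `W = V^⊥`, then `Λ₃(f_W) ≤ Λ₃(f) + Δ`. -/
theorem stmt9 (p : ℕ) (hp : p.Prime) (hodd : Odd p) [NeZero p] (n : ℕ) (hn : 1 ≤ n)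
    (Δ : ℝ) (hΔ : 0 < Δ)
    (f : (Fin n → ZMod p) → ℝ) (hf : ∀ m, 0 ≤ f m ∧ f m ≤ 1)
    (V : Submodule (ZMod p) (Fin n → ZMod p))
    (hV : ∀ a : Fin n → ZMod p, Δ * (p : ℝ) ^ n < ‖ft f a‖ → a ∈ V)
    (W : Submodule (ZMod p) (Fin n → ZMod p))
    (hW : ∀ w : Fin n → ZMod p, w ∈ W ↔ ∀ v ∈ V, dotProduct w v = 0) :
    lambda3 (avgW W f) ≤ lambda3 f + Δ :=
  stmt9_general p hodd n Δ hΔ f hf V hV W hW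
end

section
/- Let p be an odd prime, n ≥ 1, 0 < ε < 2, and let V, W be 𝔽_p-subspaces of 𝔽_p^n with V ∩ W = {0} and V + W = 𝔽_p^n. Let f : 𝔽_p^n → [0,1] satisfy 𝔼(|f − f_W|) > ε. Define V' = {v ∈ V : ε/4 ≤ f_W(v) ≤ 1 − ε/4}. Then |V'| > ε·|V|/2. -/
open scoped Classical

noncomputable def expect {p n : ℕ} [NeZero p] (f : (Fin n → ZMod p) → ℝ) : ℝ :=
  (∑ m : Fin n → ZMod p, f m) / (p : ℝ) ^ n

section aux

variable {p n : ℕ} [NeZero p] (W : Submodule (ZMod p) (Fin n → ZMod p))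

lemma cardW_pos : 0 < (Nat.card W : ℝ) := by
  have : Nonempty W := ⟨0⟩
  exact_mod_cast Nat.card_pos

lemma avgW_translate (f : (Fin n → ZMod p) → ℝ) (m : Fin n → ZMod p) (w' : W) :
    avgW W f (m + ↑w') = avgW W f m := by
  unfold avgW
  congr 1
  refine Fintype.sum_equiv (Equiv.addLeft w') _ _ (fun w => ?_)
  simp [Equiv.addLeft]
  congr 1
  ring

lemma avgW_nonneg (f : (Fin n → ZMod p) → ℝ) (hf : ∀ m, 0 ≤ f m) (m : Fin n → ZMod p) :
    0 ≤ avgW W f m :=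
  div_nonneg (Finset.sum_nonneg fun w _ => hf _) (le_of_lt (cardW_pos W))

lemma avgW_le_one (f : (Fin n → ZMod p) → ℝ) (hf : ∀ m, f m ≤ 1) (m : Fin n → ZMod p) :
    avgW W f m ≤ 1 := by
  unfold avgW
  rw [div_le_one (cardW_pos W)]
  calc ∑ w : W, f (m + ↑w) ≤ ∑ _w : W, (1:ℝ) := Finset.sum_le_sum fun w _ => hf _
    _ = (Nat.card W : ℝ) := by simp [Nat.card_eq_fintype_card]

lemma avgW_abs : ∀ (f : (Fin n → ZMod p) → ℝ), (∀ m, 0 ≤ f m ∧ f m ≤ 1) →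
    ∀ m, avgW W (fun x => |f x - avgW W f x|) m ≤ 2 * avgW W f m ∧
      avgW W (fun x => |f x - avgW W f x|) m ≤ 2 * (1 - avgW W f m) ∧
      avgW W (fun x => |f x - avgW W f x|) m ≤ 1 := by
  intro f hf m
  set F := avgW W f m with hF
  have hF0 : 0 ≤ F := avgW_nonneg W f (fun m => (hf m).1) m
  have hF1 : F ≤ 1 := avgW_le_one W f (fun m => (hf m).2) m
  have hsum : ∀ w : W, |f (m + ↑w) - avgW W f (m + ↑w)| = |f (m + ↑w) - F| := by
    intro w; rw [avgW_translate]
  have hkey : avgW W (fun x => |f x - avgW W f x|) m =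
      (∑ w : W, |f (m + ↑w) - F|) / (Nat.card W : ℝ) := by
    unfold avgW
    congr 1
    exact Finset.sum_congr rfl fun w _ => hsum w
  have hcard : (∑ _w : W, (1:ℝ)) = (Nat.card W : ℝ) := by simp [Nat.card_eq_fintype_card]
  have hfsum : ∑ w : W, f (m + ↑w) = (Nat.card W : ℝ) * F := by
    rw [hF]; unfold avgW; field_simp
  refine ⟨?_, ?_, ?_⟩
  · rw [hkey, div_le_iff₀ (cardW_pos W)]
    calc ∑ w : W, |f (m + ↑w) - F| ≤ ∑ w : W, (f (m + ↑w) + F) := by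
          refine Finset.sum_le_sum fun w _ => ?_
          have := (hf (m + ↑w)).1
          rw [abs_le]; constructor <;> nlinarith
      _ = 2 * F * (Nat.card W : ℝ) := by
          rw [Finset.sum_add_distrib, hfsum, Finset.sum_const, Finset.card_univ,
            nsmul_eq_mul, Nat.card_eq_fintype_card]
          ring
  · rw [hkey, div_le_iff₀ (cardW_pos W)]
    calc ∑ w : W, |f (m + ↑w) - F| ≤ ∑ w : W, ((1 - f (m + ↑w)) + (1 - F)) := by
          refine Finset.sum_le_sum fun w _ => ?_
          have := (hf (m + ↑w)).2
          rw [abs_le]; constructor <;> nlinarith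
      _ = 2 * (1 - F) * (Nat.card W : ℝ) := by
          rw [Finset.sum_add_distrib, Finset.sum_sub_distrib, hfsum, Finset.sum_const,
            Finset.sum_const, Finset.card_univ, nsmul_eq_mul, Nat.card_eq_fintype_card]
          ring
  · rw [hkey, div_le_iff₀ (cardW_pos W)]
    calc ∑ w : W, |f (m + ↑w) - F| ≤ ∑ _w : W, (1:ℝ) := by
          refine Finset.sum_le_sum fun w _ => ?_
          have h1 := (hf (m + ↑w)).1
          have h2 := (hf (m + ↑w)).2
          rw [abs_le]; constructor <;> linarith
      _ = 1 * (Nat.card W : ℝ) := by rw [hcard]; ring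

end aux

/-- if `𝔽_pⁿ = V ⊕ W` and `𝔼(|f − f_W|) > ε`, then the set
`V' = {v ∈ V : ε/4 ≤ f_W(v) ≤ 1 − ε/4}` satisfies `|V'| > ε|V|/2`. -/
theorem stmt15 (p : ℕ) (hp : p.Prime) (hodd : Odd p) [NeZero p] (n : ℕ)
    (ε : ℝ) (hε0 : 0 < ε) (hε2 : ε < 2)
    (V W : Submodule (ZMod p) (Fin n → ZMod p))
    (hmeet : V ⊓ W = ⊥) (hjoin : V ⊔ W = ⊤)
    (f : (Fin n → ZMod p) → ℝ) (hf : ∀ m, 0 ≤ f m ∧ f m ≤ 1)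
    (hfar : ε < expect (fun m => |f m - avgW W f m|)) :
    ε * (Nat.card V : ℝ) / 2 <
      ((Finset.univ.filter (fun v : Fin n → ZMod p =>
        v ∈ V ∧ ε / 4 ≤ avgW W f v ∧ avgW W f v ≤ 1 - ε / 4)).card : ℝ) := by
  have hcompl : IsCompl V W := ⟨disjoint_iff.mpr hmeet, codisjoint_iff.mpr hjoin⟩
  set h : (Fin n → ZMod p) → ℝ := fun m => |f m - avgW W f m| with hh
  set g : (Fin n → ZMod p) → ℝ := fun m => avgW W h m with hg
  have hWpos := cardW_pos W
  have hVpos : (0:ℝ) < (Nat.card V : ℝ) := cardW_pos V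
  -- cardinality
  have hcard : ((p:ℝ)) ^ n = (Nat.card V : ℝ) * (Nat.card W : ℝ) := by
    have h1 : Nat.card (V × W) = Nat.card (Fin n → ZMod p) :=
      Nat.card_congr (Submodule.prodEquivOfIsCompl V W hcompl).toEquiv
    have h2 : Nat.card (Fin n → ZMod p) = p ^ n := by
      simp [Nat.card_eq_fintype_card, ZMod.card]
    rw [Nat.card_prod] at h1
    have h3 : ((p:ℝ))^n = ((p^n : ℕ) : ℝ) := by push_cast; ring
    rw [h3, ← h2, ← h1]
    push_cast
    ring
  -- sum decomposition
  have hsum : ∑ m : Fin n → ZMod p, h m = ∑ v : V, (Nat.card W : ℝ) * g ↑v := by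
    rw [← Fintype.sum_equiv (Submodule.prodEquivOfIsCompl V W hcompl).toEquiv
      (fun x : V × W => h ((Submodule.prodEquivOfIsCompl V W hcompl) x)) h (fun x => rfl)]
    rw [Fintype.sum_prod_type]
    refine Finset.sum_congr rfl fun v _ => ?_
    have : ∀ w : W, h ((Submodule.prodEquivOfIsCompl V W hcompl) (v, w)) = h (↑v + ↑w) := by
      intro w; rw [Submodule.coe_prodEquivOfIsCompl']
    rw [Finset.sum_congr rfl fun w _ => this w]
    rw [hg]
    unfold avgW
    field_simp
  -- expectation rewrite
  have hexp : expect h = (∑ v : V, g ↑v) / (Nat.card V : ℝ) := by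
    unfold expect
    rw [hsum, hcard, ← Finset.mul_sum]
    field_simp
  have hfar' : ε * (Nat.card V : ℝ) < ∑ v : V, g ↑v := by
    have : ε < (∑ v : V, g ↑v) / (Nat.card V : ℝ) := by rw [← hexp]; exact hfar
    calc ε * (Nat.card V : ℝ) < ((∑ v : V, g ↑v) / (Nat.card V : ℝ)) * (Nat.card V : ℝ) := by
          exact mul_lt_mul_of_pos_right this hVpos
      _ = ∑ v : V, g ↑v := by field_simp
  -- split the sum
  set S : Finset V := Finset.univ.filter
    (fun v : V => ε / 4 ≤ avgW W f ↑v ∧ avgW W f ↑v ≤ 1 - ε / 4) with hS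
  have habs := avgW_abs W f hf
  have hsum_le : ∑ v : V, g ↑v ≤ (S.card : ℝ) + (Nat.card V : ℝ) * (ε / 2) := by
    rw [← Finset.sum_filter_add_sum_filter_not Finset.univ
      (fun v : V => ε / 4 ≤ avgW W f ↑v ∧ avgW W f ↑v ≤ 1 - ε / 4) (fun v => g ↑v)]
    have h1 : ∑ v ∈ S, g ↑v ≤ (S.card : ℝ) := by
      calc ∑ v ∈ S, g ↑v ≤ ∑ _v ∈ S, (1:ℝ) :=
            Finset.sum_le_sum fun v _ => (habs ↑v).2.2
        _ = (S.card : ℝ) := by simp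
    have h2 : ∑ v ∈ Finset.univ.filter (fun v : V =>
          ¬(ε / 4 ≤ avgW W f ↑v ∧ avgW W f ↑v ≤ 1 - ε / 4)), g ↑v
        ≤ (Nat.card V : ℝ) * (ε / 2) := by
      calc ∑ v ∈ Finset.univ.filter (fun v : V =>
            ¬(ε / 4 ≤ avgW W f ↑v ∧ avgW W f ↑v ≤ 1 - ε / 4)), g ↑v
          ≤ ∑ _v ∈ Finset.univ.filter (fun v : V =>
            ¬(ε / 4 ≤ avgW W f ↑v ∧ avgW W f ↑v ≤ 1 - ε / 4)), (ε/2) := by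
            refine Finset.sum_le_sum fun v hv => ?_
            rw [Finset.mem_filter] at hv
            rcases not_and_or.mp hv.2 with hlt | hgt
            · have := (habs ↑v).1
              push_neg at hlt
              linarith
            · have := (habs ↑v).2.1
              push_neg at hgt
              linarith
        _ = ((Finset.univ.filter (fun v : V =>
            ¬(ε / 4 ≤ avgW W f ↑v ∧ avgW W f ↑v ≤ 1 - ε / 4))).card : ℝ) * (ε/2) := by
            simp [mul_comm]
        _ ≤ (Nat.card V : ℝ) * (ε / 2) := by
            refine mul_le_mul_of_nonneg_right ?_ (by linarith)
            rw [Nat.card_eq_fintype_card]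
            exact_mod_cast Finset.card_filter_le _ _
    linarith
  -- relate S.card to the ambient filter card
  have hScard : S.card = (Finset.univ.filter (fun v : Fin n → ZMod p =>
      v ∈ V ∧ ε / 4 ≤ avgW W f v ∧ avgW W f v ≤ 1 - ε / 4)).card := by
    refine Finset.card_bij (fun v _ => (v : Fin n → ZMod p)) ?_ ?_ ?_
    · intro v hv
      rw [Finset.mem_filter] at hv ⊢
      exact ⟨Finset.mem_univ _, v.2, hv.2⟩
    · intro a ha b hb hab
      exact Subtype.ext hab
    · intro m hm
      rw [Finset.mem_filter] at hm
      exact ⟨⟨m, hm.2.1⟩, by rw [Finset.mem_filter]; exact ⟨Finset.mem_univ _, hm.2.2⟩, rfl⟩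
  rw [← hScard]
  linarith
end
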